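/- For every real h > 1, |∫_{−1}^{1} x·(2(h−x)(1−x²))^{−1/2} dx| ≤ 1/√(h−1) + 1/√h. -/

import Mathlib

/-!
Split the integral at `0`. For `0 ≤ x ≤ 1` we have `h - x ≥ h - 1` and `2x² ≤ 1 + x`, and
for `-1 ≤ x ≤ 0` we have `h - x ≥ h` and `2x² ≤ 1 - x`. Hence the integrand is dominated by
`(2√(h-1))⁻¹ (1-x)^(-1/2)` on `[0, 1]` and by `(2√h)⁻¹ (1+x)^(-1/2)` on `[-1, 0]`, and
these integrate to `1/√(h-1)` and `1/√h`.
-/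

open MeasureTheory intervalIntegral

open Real Set

section InvSqrt

variable {a b c : ℝ}

lemma inv_sqrt_eq_rpow {x : ℝ} (hx : 0 ≤ x) : (√x)⁻¹ = x ^ (-(1 / 2) : ℝ) := by
  rw [sqrt_eq_rpow, rpow_neg hx]

lemma intervalIntegrable_inv_sqrt (hc : 0 ≤ c) :
    IntervalIntegrable (fun x => (√x)⁻¹) volume 0 c :=
  (intervalIntegrable_rpow' (by norm_num)).congr_uIoo fun x hx =>
    (inv_sqrt_eq_rpow (by rw [uIoo_of_le hc] at hx; exact hx.1.le)).symm

lemma integral_inv_sqrt (hc : 0 ≤ c) : ∫ x in (0 : ℝ)..c, (√x)⁻¹ = 2 * √c := by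
  have hEq : EqOn (fun x => (√x)⁻¹) (fun x => x ^ (-(1 / 2) : ℝ)) (uIcc 0 c) := fun x hx =>
    inv_sqrt_eq_rpow (by rw [uIcc_of_le hc] at hx; exact hx.1)
  rw [integral_congr hEq, integral_rpow (Or.inl (by norm_num)), sqrt_eq_rpow,
    zero_rpow (by norm_num)]
  ring_nf

lemma intervalIntegrable_inv_sqrt_sub_left (hab : a ≤ b) :
    IntervalIntegrable (fun x => (√(b - x))⁻¹) volume a b := by
  simpa using ((intervalIntegrable_inv_sqrt (sub_nonneg.2 hab)).comp_sub_left b).symm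

lemma integral_inv_sqrt_sub_left (hab : a ≤ b) :
    ∫ x in a..b, (√(b - x))⁻¹ = 2 * √(b - a) := by
  rw [integral_comp_sub_left (fun x => (√x)⁻¹), sub_self,
    integral_inv_sqrt (sub_nonneg.2 hab)]

lemma intervalIntegrable_inv_sqrt_sub_right (hab : a ≤ b) :
    IntervalIntegrable (fun x => (√(x - a))⁻¹) volume a b := by
  simpa using (intervalIntegrable_inv_sqrt (sub_nonneg.2 hab)).comp_sub_right a

lemma integral_inv_sqrt_sub_right (hab : a ≤ b) :
    ∫ x in a..b, (√(x - a))⁻¹ = 2 * √(b - a) := by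
  rw [integral_comp_sub_right (fun x => (√x)⁻¹), sub_self,
    integral_inv_sqrt (sub_nonneg.2 hab)]

lemma intervalIntegrable_inv_sqrt_add_one :
    IntervalIntegrable (fun x => (√(x + 1))⁻¹) volume (-1) 0 := by
  simpa using intervalIntegrable_inv_sqrt_sub_right (a := -1) (b := 0) (by norm_num)

lemma integral_inv_sqrt_add_one : ∫ x in (-1 : ℝ)..0, (√(x + 1))⁻¹ = 2 := by
  simpa using integral_inv_sqrt_sub_right (a := -1) (b := 0) (by norm_num)

end InvSqrt

lemma abs_mul_inv_sqrt_le {x q a c : ℝ} (ha : 0 < a) (hc : 0 < c) (hq : (x * a) ^ 2 * c ≤ q) :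
    |x * (√q)⁻¹| ≤ (a * √c)⁻¹ := by
  rcases (le_trans (by positivity) hq).eq_or_lt with rfl | hq₀
  · rw [sqrt_zero, inv_zero, mul_zero, abs_zero]
    positivity
  have hx : |x| * (a * √c) = √((x * a) ^ 2 * c) := by
    rw [sqrt_mul (sq_nonneg _), sqrt_sq_eq_abs, abs_mul, abs_of_pos ha, mul_assoc]
  rw [abs_mul, abs_inv, abs_of_nonneg (sqrt_nonneg q), ← div_eq_mul_inv, ← one_div,
    div_le_div_iff₀ (sqrt_pos.2 hq₀) (by positivity), one_mul, hx]
  exact sqrt_le_sqrt hq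

/-- `x · P_{h,0}(x)^(-1/2)`, the integrand of `I(h,0)` (without the factor `2/π`). -/
noncomputable def integrandI (h x : ℝ) : ℝ := x * (√(2 * (h - x) * (1 - x ^ 2)))⁻¹

section integrandI

variable {h x : ℝ}

lemma measurable_integrandI (h : ℝ) : Measurable (integrandI h) := by
  unfold integrandI; fun_prop

lemma abs_integrandI_le_of_nonneg (hh : 1 < h) (hx₀ : 0 ≤ x) (hx₁ : x ≤ 1) :
    |integrandI h x| ≤ (2 * √(h - 1))⁻¹ * (√(1 - x))⁻¹ := by
  rcases hx₁.eq_or_lt with rfl | hx₁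
  · simp [integrandI]
  rw [← mul_inv]
  refine abs_mul_inv_sqrt_le (by positivity [sqrt_pos.2 (sub_pos.2 hh)]) (by linarith) ?_
  rw [mul_pow, mul_pow, sq_sqrt (by linarith)]
  have key : 0 ≤ (1 - x) ^ 2 * ((h - 1) * (1 + 2 * x) + (1 + x)) :=
    mul_nonneg (sq_nonneg _) <|
      add_nonneg (mul_nonneg (by linarith) (by linarith)) (by linarith)
  linear_combination 2 * key

lemma abs_integrandI_le_of_nonpos (hh : 0 < h) (hx₀ : -1 ≤ x) (hx₁ : x ≤ 0) :
    |integrandI h x| ≤ (2 * √h)⁻¹ * (√(x + 1))⁻¹ := by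
  rcases hx₀.eq_or_lt with rfl | hx₀
  · norm_num [integrandI]
  rw [← mul_inv]
  refine abs_mul_inv_sqrt_le (by positivity) (by linarith) ?_
  rw [mul_pow, mul_pow, sq_sqrt hh.le]
  have key : 0 ≤ (1 + x) * (h * (1 - 2 * x) * (1 + x) + -x * (1 - x)) :=
    mul_nonneg (by linarith) <| add_nonneg
      (mul_nonneg (mul_nonneg hh.le (by linarith)) (by linarith))
      (mul_nonneg (by linarith) (by linarith))
  linear_combination 2 * key

end integrandI

section Domination

variable {f g : ℝ → ℝ} {a b : ℝ}

lemma intervalIntegrable_of_abs_le (hab : a ≤ b) (hf : Measurable f)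
    (hg : IntervalIntegrable g volume a b) (hfg : ∀ x ∈ Icc a b, |f x| ≤ g x) :
    IntervalIntegrable f volume a b :=
  hg.mono_fun' hf.aestronglyMeasurable <| ae_restrict_of_forall_mem measurableSet_uIoc
    fun x hx => hfg x <| Ioc_subset_Icc_self <| by rwa [uIoc_of_le hab] at hx

lemma abs_integral_le_of_abs_le (hab : a ≤ b) (hg : IntervalIntegrable g volume a b)
    (hfg : ∀ x ∈ Icc a b, |f x| ≤ g x) : |∫ x in a..b, f x| ≤ ∫ x in a..b, g x := by
  simpa only [Real.norm_eq_abs] using norm_integral_le_of_norm_le (f := f) hab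
    (ae_of_all _ fun x hx => hfg x (Ioc_subset_Icc_self hx)) hg

end Domination

section integrandIHalves

variable {h : ℝ}

lemma intervalIntegrable_integrandI_zero_one (hh : 1 < h) :
    IntervalIntegrable (integrandI h) volume 0 1 :=
  intervalIntegrable_of_abs_le zero_le_one (measurable_integrandI h)
    ((intervalIntegrable_inv_sqrt_sub_left zero_le_one).const_mul _)
    fun _ hx => abs_integrandI_le_of_nonneg hh hx.1 hx.2

lemma abs_integral_integrandI_zero_one_le (hh : 1 < h) :
    |∫ x in (0 : ℝ)..1, integrandI h x| ≤ 1 / √(h - 1) :=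
  calc |∫ x in (0 : ℝ)..1, integrandI h x|
      ≤ ∫ x in (0 : ℝ)..1, (2 * √(h - 1))⁻¹ * (√(1 - x))⁻¹ :=
        abs_integral_le_of_abs_le zero_le_one
          ((intervalIntegrable_inv_sqrt_sub_left zero_le_one).const_mul _)
          fun _ hx => abs_integrandI_le_of_nonneg hh hx.1 hx.2
    _ = 1 / √(h - 1) := by
        rw [intervalIntegral.integral_const_mul, integral_inv_sqrt_sub_left zero_le_one]
        field_simp [(sqrt_pos.2 (sub_pos.2 hh)).ne']
        norm_num

lemma intervalIntegrable_integrandI_neg_one_zero (hh : 0 < h) :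
    IntervalIntegrable (integrandI h) volume (-1) 0 :=
  intervalIntegrable_of_abs_le (by norm_num) (measurable_integrandI h)
    (intervalIntegrable_inv_sqrt_add_one.const_mul _)
    fun _ hx => abs_integrandI_le_of_nonpos hh hx.1 hx.2

lemma abs_integral_integrandI_neg_one_zero_le (hh : 0 < h) :
    |∫ x in (-1 : ℝ)..0, integrandI h x| ≤ 1 / √h :=
  calc |∫ x in (-1 : ℝ)..0, integrandI h x|
      ≤ ∫ x in (-1 : ℝ)..0, (2 * √h)⁻¹ * (√(x + 1))⁻¹ :=
        abs_integral_le_of_abs_le (by norm_num) (intervalIntegrable_inv_sqrt_add_one.const_mul _)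
          fun _ hx => abs_integrandI_le_of_nonpos hh hx.1 hx.2
    _ = 1 / √h := by
        rw [intervalIntegral.integral_const_mul, integral_inv_sqrt_add_one]
        field_simp [(sqrt_pos.2 hh).ne']

end integrandIHalves

theorem I_integral_bound (h : ℝ) (hh : 1 < h) :
    |∫ x in (-1 : ℝ)..1, x * (Real.sqrt (2 * (h - x) * (1 - x ^ 2)))⁻¹|
      ≤ 1 / Real.sqrt (h - 1) + 1 / Real.sqrt h := by
  change |∫ x in (-1 : ℝ)..1, integrandI h x| ≤ _
  rw [← integral_add_adjacent_intervals (intervalIntegrable_integrandI_neg_one_zero (by linarith))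
    (intervalIntegrable_integrandI_zero_one hh)]
  calc _ ≤ |∫ x in (-1 : ℝ)..0, integrandI h x| + |∫ x in (0 : ℝ)..1, integrandI h x| :=
        abs_add_le _ _
    _ ≤ 1 / √h + 1 / √(h - 1) :=
        add_le_add (abs_integral_integrandI_neg_one_zero_le (by linarith))
          (abs_integral_integrandI_zero_one_le hh)
    _ = _ := add_comm _ _
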